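/- arXiv:math/0701209 — 7 statements merged into one kernel-verified Lean document; each statement's English description precedes it below -/
import Mathlib

section
/- Let $\mathfrak{g}$ be a finite-dimensional Lie algebra, $r \in \wedge^2 \mathfrak{g}$ a skew-symmetric tensor, and $\psi \in \wedge^3 \mathfrak{g}^*$ a 3-cocycle satisfying the twisted classical Yang-Baxter equation $\frac{1}{2}[r,r] = (\wedge^3 r^\sharp)\psi$. Then the bracket $[\alpha,\beta]_{r,\psi} = \mathrm{ad}^*_{r^\sharp\alpha}(\beta) - \mathrm{ad}^*_{r^\sharp\beta}(\alpha) + \psi(r^\sharp\alpha, r^\sharp\beta, \cdot)$ defines a Lie algebra structure on $\mathfrak{g}^*$. -/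
/-!
The map `r♯ : g* → g` intertwines `[·,·]_{r,ψ}` with the bracket of `g`: pairing
`r♯[α,β]_{r,ψ} - [r♯α, r♯β]` with an arbitrary `γ` and using the skew-symmetry of `r` gives
exactly the twisted Yang–Baxter equation. With this, the Jacobiator of `[·,·]_{r,ψ}`, evaluated
at `X ∈ g`, splits into a part in `ψ`, which is the cocycle identity `dψ(r♯α, r♯β, r♯γ, X) = 0`,
and a part in `ad*`, which vanishes by the Jacobi identity of `g`.
-/

/-- The bracket `[α,β]_{r,ψ} = ad*_{r^♯α}(β) - ad*_{r^♯β}(α) + ψ(r^♯α, r^♯β, ·)`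
on the dual of a Lie algebra `g`, where `r^♯` is the map induced by `r ∈ ∧²g` and
`ψ` is a trilinear form (a 3-cochain of `g`), written here in curried form. -/
noncomputable def twBracket {g : Type*} [LieRing g] [LieAlgebra ℝ g]
    (rsharp : Module.Dual ℝ g →ₗ[ℝ] g)
    (ψ : g →ₗ[ℝ] g →ₗ[ℝ] Module.Dual ℝ g)
    (α β : Module.Dual ℝ g) : Module.Dual ℝ g :=
  ψ (rsharp α) (rsharp β)
    - β ∘ₗ (LieAlgebra.ad ℝ g (rsharp α))
    + α ∘ₗ (LieAlgebra.ad ℝ g (rsharp β))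

section Alternating

variable {R M : Type*} [CommRing R] [AddCommGroup M] [Module R M]
  {ψ : M →ₗ[R] M →ₗ[R] Module.Dual R M}

theorem LinearMap.IsAlt.trilinear_cycle (h₁ : ψ.IsAlt) (h₂ : ∀ X, (ψ X).IsAlt) (X Y Z : M) :
    ψ X Y Z = ψ Y Z X := by
  rw [← h₁.neg, LinearMap.neg_apply, ← (h₂ Y).neg, neg_neg]

end Alternating

section Cocycle

variable {R L : Type*} [CommRing R] [LieRing L] [LieAlgebra R L]
  {ψ : L →ₗ[R] L →ₗ[R] Module.Dual R L}

theorem cocycle_cyclic (h₁ : ψ.IsAlt) (h₂ : ∀ X, (ψ X).IsAlt)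
    (hcocycle : ∀ X Y Z W : L,
      ψ ⁅X, Y⁆ Z W - ψ ⁅X, Z⁆ Y W + ψ ⁅X, W⁆ Y Z
        + ψ ⁅Y, Z⁆ X W - ψ ⁅Y, W⁆ X Z + ψ ⁅Z, W⁆ X Y = 0)
    (a b c X : L) :
    ψ ⁅a, b⁆ c X + ψ ⁅b, c⁆ a X + ψ ⁅c, a⁆ b X
      + ψ a b ⁅c, X⁆ + ψ b c ⁅a, X⁆ + ψ c a ⁅b, X⁆ = 0 := by
  have hca : ψ ⁅c, a⁆ b X = -ψ ⁅a, c⁆ b X := by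
    rw [← lie_skew, map_neg, LinearMap.neg_apply, LinearMap.neg_apply]
  have hab : ψ a b ⁅c, X⁆ = ψ ⁅c, X⁆ a b := (h₁.trilinear_cycle h₂ _ _ _).symm
  have hbc : ψ b c ⁅a, X⁆ = ψ ⁅a, X⁆ b c := (h₁.trilinear_cycle h₂ _ _ _).symm
  have hca' : ψ c a ⁅b, X⁆ = -ψ ⁅b, X⁆ a c := by
    rw [← h₁.trilinear_cycle h₂, ← (h₂ _).neg]
  linear_combination hcocycle a b c X + hca + hab + hbc + hca'

end Cocycle

section TwistedBracket

variable {g : Type*} [LieRing g] [LieAlgebra ℝ g]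
  (rsharp : Module.Dual ℝ g →ₗ[ℝ] g) (ψ : g →ₗ[ℝ] g →ₗ[ℝ] Module.Dual ℝ g)

@[simp]
theorem twBracket_apply (α β : Module.Dual ℝ g) (X : g) :
    twBracket rsharp ψ α β X
      = ψ (rsharp α) (rsharp β) X - β ⁅rsharp α, X⁆ + α ⁅rsharp β, X⁆ := by
  simp [twBracket]

theorem twBracket_add_left (α₁ α₂ β : Module.Dual ℝ g) :
    twBracket rsharp ψ (α₁ + α₂) β = twBracket rsharp ψ α₁ β + twBracket rsharp ψ α₂ β := by
  ext X
  simp only [twBracket_apply, map_add, add_lie, LinearMap.add_apply]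
  ring

theorem twBracket_add_right (α β₁ β₂ : Module.Dual ℝ g) :
    twBracket rsharp ψ α (β₁ + β₂) = twBracket rsharp ψ α β₁ + twBracket rsharp ψ α β₂ := by
  ext X
  simp only [twBracket_apply, map_add, add_lie, LinearMap.add_apply]
  ring

theorem twBracket_smul_left (c : ℝ) (α β : Module.Dual ℝ g) :
    twBracket rsharp ψ (c • α) β = c • twBracket rsharp ψ α β := by
  ext X
  simp only [twBracket_apply, map_smul, smul_lie, LinearMap.smul_apply, smul_eq_mul]
  ring

theorem twBracket_smul_right (c : ℝ) (α β : Module.Dual ℝ g) :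
    twBracket rsharp ψ α (c • β) = c • twBracket rsharp ψ α β := by
  ext X
  simp only [twBracket_apply, map_smul, smul_lie, LinearMap.smul_apply, smul_eq_mul]
  ring

variable {rsharp ψ}

theorem twBracket_self (hψ : ψ.IsAlt) (α : Module.Dual ℝ g) : twBracket rsharp ψ α α = 0 := by
  ext X
  simp [hψ.self_eq_zero]

theorem rsharp_twBracket (hskew : ∀ α β : Module.Dual ℝ g, β (rsharp α) = -α (rsharp β))
    (hcybe : ∀ α β γ : Module.Dual ℝ g,
      γ ⁅rsharp α, rsharp β⁆ + α ⁅rsharp β, rsharp γ⁆ + β ⁅rsharp γ, rsharp α⁆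
        = -ψ (rsharp α) (rsharp β) (rsharp γ))
    (α β : Module.Dual ℝ g) :
    rsharp (twBracket rsharp ψ α β) = ⁅rsharp α, rsharp β⁆ := by
  rw [← sub_eq_zero, ← Module.forall_dual_apply_eq_zero_iff ℝ]
  intro γ
  rw [map_sub, sub_eq_zero, hskew, twBracket_apply]
  have hca : β ⁅rsharp γ, rsharp α⁆ = -β ⁅rsharp α, rsharp γ⁆ := by rw [← lie_skew, map_neg]
  linear_combination -hcybe α β γ + hca

theorem twBracket_twBracket_apply
    (hmorph : ∀ α β, rsharp (twBracket rsharp ψ α β) = ⁅rsharp α, rsharp β⁆)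
    (α β γ : Module.Dual ℝ g) (X : g) :
    twBracket rsharp ψ (twBracket rsharp ψ α β) γ X
      = ψ ⁅rsharp α, rsharp β⁆ (rsharp γ) X + ψ (rsharp α) (rsharp β) ⁅rsharp γ, X⁆
        - γ ⁅⁅rsharp α, rsharp β⁆, X⁆
        - β ⁅rsharp α, ⁅rsharp γ, X⁆⁆ + α ⁅rsharp β, ⁅rsharp γ, X⁆⁆ := by
  rw [twBracket_apply, hmorph, twBracket_apply]
  ring

theorem twBracket_jacobi (hψ₁ : ψ.IsAlt) (hψ₂ : ∀ X, (ψ X).IsAlt)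
    (hcocycle : ∀ X Y Z W : g,
      ψ ⁅X, Y⁆ Z W - ψ ⁅X, Z⁆ Y W + ψ ⁅X, W⁆ Y Z
        + ψ ⁅Y, Z⁆ X W - ψ ⁅Y, W⁆ X Z + ψ ⁅Z, W⁆ X Y = 0)
    (hmorph : ∀ α β, rsharp (twBracket rsharp ψ α β) = ⁅rsharp α, rsharp β⁆)
    (α β γ : Module.Dual ℝ g) :
    twBracket rsharp ψ (twBracket rsharp ψ α β) γ
      + twBracket rsharp ψ (twBracket rsharp ψ β γ) α
      + twBracket rsharp ψ (twBracket rsharp ψ γ α) β = 0 := by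
  ext X
  set a := rsharp α
  set b := rsharp β
  set c := rsharp γ
  simp only [LinearMap.add_apply, LinearMap.zero_apply, twBracket_twBracket_apply hmorph]
  have jac_a : α ⁅b, ⁅c, X⁆⁆ = α ⁅⁅b, c⁆, X⁆ + α ⁅c, ⁅b, X⁆⁆ := by rw [leibniz_lie, map_add]
  have jac_b : β ⁅c, ⁅a, X⁆⁆ = β ⁅⁅c, a⁆, X⁆ + β ⁅a, ⁅c, X⁆⁆ := by rw [leibniz_lie, map_add]
  have jac_c : γ ⁅a, ⁅b, X⁆⁆ = γ ⁅⁅a, b⁆, X⁆ + γ ⁅b, ⁅a, X⁆⁆ := by rw [leibniz_lie, map_add]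
  linear_combination cocycle_cyclic hψ₁ hψ₂ hcocycle a b c X + jac_a + jac_b + jac_c

end TwistedBracket

theorem statement0_general (g : Type*) [LieRing g] [LieAlgebra ℝ g]
    (rsharp : Module.Dual ℝ g →ₗ[ℝ] g)
    (hskew : ∀ α β : Module.Dual ℝ g, β (rsharp α) = - α (rsharp β))
    (ψ : g →ₗ[ℝ] g →ₗ[ℝ] Module.Dual ℝ g)
    (halt1 : ∀ X Y : g, ψ X X Y = 0)
    (halt2 : ∀ X Y : g, ψ X Y Y = 0)
    (hcocycle : ∀ X Y Z W : g,
      ψ ⁅X, Y⁆ Z W - ψ ⁅X, Z⁆ Y W + ψ ⁅X, W⁆ Y Z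
        + ψ ⁅Y, Z⁆ X W - ψ ⁅Y, W⁆ X Z + ψ ⁅Z, W⁆ X Y = 0)
    (hcybe : ∀ α β γ : Module.Dual ℝ g,
      γ ⁅rsharp α, rsharp β⁆ + α ⁅rsharp β, rsharp γ⁆ + β ⁅rsharp γ, rsharp α⁆
        = - ψ (rsharp α) (rsharp β) (rsharp γ)) :
    (∀ (α β₁ β₂ : Module.Dual ℝ g),
        twBracket rsharp ψ α (β₁ + β₂)
          = twBracket rsharp ψ α β₁ + twBracket rsharp ψ α β₂) ∧
    (∀ (c : ℝ) (α β : Module.Dual ℝ g),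
        twBracket rsharp ψ α (c • β) = c • twBracket rsharp ψ α β) ∧
    (∀ (α₁ α₂ β : Module.Dual ℝ g),
        twBracket rsharp ψ (α₁ + α₂) β
          = twBracket rsharp ψ α₁ β + twBracket rsharp ψ α₂ β) ∧
    (∀ (c : ℝ) (α β : Module.Dual ℝ g),
        twBracket rsharp ψ (c • α) β = c • twBracket rsharp ψ α β) ∧
    (∀ α : Module.Dual ℝ g, twBracket rsharp ψ α α = 0) ∧
    (∀ α β γ : Module.Dual ℝ g,
        twBracket rsharp ψ (twBracket rsharp ψ α β) γ
          + twBracket rsharp ψ (twBracket rsharp ψ β γ) α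
          + twBracket rsharp ψ (twBracket rsharp ψ γ α) β = 0) := by
  have hψ₁ : ψ.IsAlt := fun X ↦ LinearMap.ext (halt1 X)
  have hψ₂ : ∀ X, (ψ X).IsAlt := halt2
  have hmorph := rsharp_twBracket hskew hcybe
  exact ⟨twBracket_add_right rsharp ψ, twBracket_smul_right rsharp ψ,
    twBracket_add_left rsharp ψ, twBracket_smul_left rsharp ψ, twBracket_self hψ₁,
    twBracket_jacobi hψ₁ hψ₂ hcocycle hmorph⟩

/-- if `(r, ψ)` satisfies the twisted classical Yang–Baxter equation
`½[r,r] = (∧³ r^♯)ψ` (written pointwise via a cyclic sum), with `ψ` an alternating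
3-cocycle, then `[·,·]_{r,ψ}` is a Lie algebra bracket on `g*`. -/
theorem statement0 (g : Type*) [LieRing g] [LieAlgebra ℝ g] [FiniteDimensional ℝ g]
    (rsharp : Module.Dual ℝ g →ₗ[ℝ] g)
    (hskew : ∀ α β : Module.Dual ℝ g, β (rsharp α) = - α (rsharp β))
    (ψ : g →ₗ[ℝ] g →ₗ[ℝ] Module.Dual ℝ g)
    (halt1 : ∀ X Y : g, ψ X X Y = 0)
    (halt2 : ∀ X Y : g, ψ X Y Y = 0)
    (hcocycle : ∀ X Y Z W : g,
      ψ ⁅X, Y⁆ Z W - ψ ⁅X, Z⁆ Y W + ψ ⁅X, W⁆ Y Z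
        + ψ ⁅Y, Z⁆ X W - ψ ⁅Y, W⁆ X Z + ψ ⁅Z, W⁆ X Y = 0)
    (hcybe : ∀ α β γ : Module.Dual ℝ g,
      γ ⁅rsharp α, rsharp β⁆ + α ⁅rsharp β, rsharp γ⁆ + β ⁅rsharp γ, rsharp α⁆
        = - ψ (rsharp α) (rsharp β) (rsharp γ)) :
    (∀ (α β₁ β₂ : Module.Dual ℝ g),
        twBracket rsharp ψ α (β₁ + β₂)
          = twBracket rsharp ψ α β₁ + twBracket rsharp ψ α β₂) ∧
    (∀ (c : ℝ) (α β : Module.Dual ℝ g),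
        twBracket rsharp ψ α (c • β) = c • twBracket rsharp ψ α β) ∧
    (∀ (α₁ α₂ β : Module.Dual ℝ g),
        twBracket rsharp ψ (α₁ + α₂) β
          = twBracket rsharp ψ α₁ β + twBracket rsharp ψ α₂ β) ∧
    (∀ (c : ℝ) (α β : Module.Dual ℝ g),
        twBracket rsharp ψ (c • α) β = c • twBracket rsharp ψ α β) ∧
    (∀ α : Module.Dual ℝ g, twBracket rsharp ψ α α = 0) ∧
    (∀ α β γ : Module.Dual ℝ g,
        twBracket rsharp ψ (twBracket rsharp ψ α β) γ
          + twBracket rsharp ψ (twBracket rsharp ψ β γ) α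
          + twBracket rsharp ψ (twBracket rsharp ψ γ α) β = 0) :=
  statement0_general g rsharp hskew ψ halt1 halt2 hcocycle hcybe
end

section
/- Let $(\mathfrak{g}, r, \psi)$ be a Lie algebra with a twisted triangular $r$-matrix structure, and let $\mathfrak{p} = \mathrm{Im}\, r^\sharp$ be the carrier subalgebra. Then $\mathrm{Ker}\, r^\sharp \subset \mathfrak{g}^*$ is stable under the coadjoint action of $\mathfrak{p}$: for all $X \in \mathfrak{p}$ and $\gamma \in \mathrm{Ker}\, r^\sharp$, $\mathrm{ad}^*_X(\gamma) \in \mathrm{Ker}\, r^\sharp$. -/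
section TwistedTriangular

variable {R L : Type*} [CommRing R] [LieRing L] [LieAlgebra R L]
  {rsharp : Module.Dual R L →ₗ[R] L}

theorem rsharp_eq_zero_iff_of_skew [Module.Projective R L]
    (hskew : ∀ α β : Module.Dual R L, β (rsharp α) = - α (rsharp β)) (δ : Module.Dual R L) :
    rsharp δ = 0 ↔ ∀ β : Module.Dual R L, δ (rsharp β) = 0 := by
  rw [← Module.forall_dual_apply_eq_zero_iff R]
  exact forall_congr' fun β ↦ by rw [hskew, neg_eq_zero]

theorem apply_lie_rsharp_eq_zero_of_rsharp_eq_zero {ψ : L →ₗ[R] L →ₗ[R] Module.Dual R L}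
    (hcybe : ∀ α β γ : Module.Dual R L,
      γ ⁅rsharp α, rsharp β⁆ + α ⁅rsharp β, rsharp γ⁆ + β ⁅rsharp γ, rsharp α⁆
        = - ψ (rsharp α) (rsharp β) (rsharp γ))
    {γ : Module.Dual R L} (hγ : rsharp γ = 0) (α β : Module.Dual R L) :
    γ ⁅rsharp α, rsharp β⁆ = 0 := by
  simpa only [hγ, lie_zero, zero_lie, map_zero, add_zero, neg_zero] using hcybe α β γ

end TwistedTriangular

theorem statement3_general (g : Type*) [LieRing g] [LieAlgebra ℝ g]
    (rsharp : Module.Dual ℝ g →ₗ[ℝ] g)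
    (hskew : ∀ α β : Module.Dual ℝ g, β (rsharp α) = - α (rsharp β))
    (ψ : g →ₗ[ℝ] g →ₗ[ℝ] Module.Dual ℝ g)
    (hcybe : ∀ α β γ : Module.Dual ℝ g,
      γ ⁅rsharp α, rsharp β⁆ + α ⁅rsharp β, rsharp γ⁆ + β ⁅rsharp γ, rsharp α⁆
        = - ψ (rsharp α) (rsharp β) (rsharp γ)) :
    ∀ X : g, (∃ α : Module.Dual ℝ g, rsharp α = X) →
      ∀ γ : Module.Dual ℝ g, rsharp γ = 0 →
        rsharp (-(γ ∘ₗ (LieAlgebra.ad ℝ g X))) = 0 := by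
  rintro X ⟨α, rfl⟩ γ hγ
  rw [rsharp_eq_zero_iff_of_skew hskew]
  intro β
  simp only [LinearMap.neg_apply, LinearMap.comp_apply, LieAlgebra.ad_apply,
    apply_lie_rsharp_eq_zero_of_rsharp_eq_zero hcybe hγ, neg_zero]

/-- the kernel of `r^♯` is stable under the coadjoint action `ad*_X γ = -γ∘ad_X` of the carrier `p = Im r^♯`. -/
theorem statement3 (g : Type*) [LieRing g] [LieAlgebra ℝ g] [FiniteDimensional ℝ g]
    (rsharp : Module.Dual ℝ g →ₗ[ℝ] g)
    (hskew : ∀ α β : Module.Dual ℝ g, β (rsharp α) = - α (rsharp β))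
    (ψ : g →ₗ[ℝ] g →ₗ[ℝ] Module.Dual ℝ g)
    (halt1 : ∀ X Y : g, ψ X X Y = 0)
    (halt2 : ∀ X Y : g, ψ X Y Y = 0)
    (hcocycle : ∀ X Y Z W : g,
      ψ ⁅X, Y⁆ Z W - ψ ⁅X, Z⁆ Y W + ψ ⁅X, W⁆ Y Z
        + ψ ⁅Y, Z⁆ X W - ψ ⁅Y, W⁆ X Z + ψ ⁅Z, W⁆ X Y = 0)
    (hcybe : ∀ α β γ : Module.Dual ℝ g,
      γ ⁅rsharp α, rsharp β⁆ + α ⁅rsharp β, rsharp γ⁆ + β ⁅rsharp γ, rsharp α⁆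
        = - ψ (rsharp α) (rsharp β) (rsharp γ)) :
    ∀ X : g, (∃ α : Module.Dual ℝ g, rsharp α = X) →
      ∀ γ : Module.Dual ℝ g, rsharp γ = 0 →
        rsharp (-(γ ∘ₗ (LieAlgebra.ad ℝ g X))) = 0 :=
  statement3_general g rsharp hskew ψ hcybe
end

section
/- Let $\mathfrak{g} \subset \mathfrak{gl}_3(\mathbb{R})$ be the Lie subalgebra spanned by $\{e_{ij} : 1 \le i \le 2,\ 1 \le j \le 3\}$. Then the pair $(r,\psi)$ with $r = e_{11}\wedge e_{22} + e_{13}\wedge e_{23}$ and $\psi = -(e_{11}^* + e_{22}^*)\wedge e_{13}^*\wedge e_{23}^*$ is a twisted triangular $r$-matrix structure on $\mathfrak{g}$: $\psi$ is a 3-cocycle of $\mathfrak{g}$ and $\frac{1}{2}[r,r] = (\wedge^3 r^\sharp)\psi$. -/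
abbrev M3 := Matrix (Fin 3) (Fin 3) ℝ

/-- The elementary matrix `e_{ij}` (indices 0-based). -/
noncomputable def E (i j : Fin 3) : M3 := Matrix.single i j 1

/-- Membership in the Lie subalgebra `g ⊂ gl₃(ℝ)` spanned by
`{e_{ij} : 1 ≤ i ≤ 2, 1 ≤ j ≤ 3}`, i.e. the matrices with vanishing third row. -/
def InG (A : M3) : Prop := ∀ j, A 2 j = 0

/-- Wedge product `α ∧ β ∧ γ` of three linear forms, evaluated on `(X,Y,Z)`. -/
def w3 (α β γ : M3 → ℝ) (X Y Z : M3) : ℝ :=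
  α X * (β Y * γ Z - β Z * γ Y) - α Y * (β X * γ Z - β Z * γ X)
    + α Z * (β X * γ Y - β Y * γ X)

/-- `ψ = -(e₁₁* + e₂₂*) ∧ e₁₃* ∧ e₂₃*`. -/
def ψ9 (X Y Z : M3) : ℝ :=
  -(w3 (fun A => A 0 0 + A 1 1) (fun A => A 0 2) (fun A => A 1 2) X Y Z)

/-- `r^♯` for `r = e₁₁ ∧ e₂₂ + e₁₃ ∧ e₂₃`, `r^♯(φ) = i_φ r`. -/
noncomputable def rsh9 (φ : Module.Dual ℝ M3) : M3 :=
  φ (E 0 0) • E 1 1 - φ (E 1 1) • E 0 0 + φ (E 0 2) • E 1 2 - φ (E 1 2) • E 0 2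

lemma lie_apply (X Y : M3) (i j : Fin 3) :
    (⁅X, Y⁆ : M3) i j = X i 0 * Y 0 j + X i 1 * Y 1 j + X i 2 * Y 2 j
      - (Y i 0 * X 0 j + Y i 1 * X 1 j + Y i 2 * X 2 j) := by
  simp [Ring.lie_def, Matrix.mul_apply, Fin.sum_univ_three]

lemma rsh9_00 (φ : Module.Dual ℝ M3) : rsh9 φ 0 0 = -φ (E 1 1) := by
  simp [rsh9, E, Matrix.single]
lemma rsh9_11 (φ : Module.Dual ℝ M3) : rsh9 φ 1 1 = φ (E 0 0) := by
  simp [rsh9, E, Matrix.single]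
lemma rsh9_02 (φ : Module.Dual ℝ M3) : rsh9 φ 0 2 = -φ (E 1 2) := by
  simp [rsh9, E, Matrix.single]
lemma rsh9_12 (φ : Module.Dual ℝ M3) : rsh9 φ 1 2 = φ (E 0 2) := by
  simp [rsh9, E, Matrix.single]

lemma bracket_rsh9 (α β : Module.Dual ℝ M3) :
    ⁅rsh9 α, rsh9 β⁆ = (α (E 1 1) * β (E 1 2) - β (E 1 1) * α (E 1 2)) • E 0 2
      + (α (E 0 0) * β (E 0 2) - β (E 0 0) * α (E 0 2)) • E 1 2 := by
  ext i j
  fin_cases i <;> fin_cases j <;>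
    simp [lie_apply, rsh9, E, Matrix.single] <;> ring

/-- `(r, ψ)` with `r = e₁₁∧e₂₂ + e₁₃∧e₂₃` and
`ψ = -(e₁₁*+e₂₂*)∧e₁₃*∧e₂₃*` is a twisted triangular `r`-matrix structure on the Lie
subalgebra `g` of `gl₃(ℝ)` of matrices with vanishing third row: `ψ` is a 3-cocycle of
`g`, and the twisted classical Yang–Baxter equation `½[r,r] = (∧³r^♯)ψ` holds
(written pointwise as a cyclic sum). -/
theorem statement9 :
    (∀ X Y Z W : M3, InG X → InG Y → InG Z → InG W →
      ψ9 ⁅X, Y⁆ Z W - ψ9 ⁅X, Z⁆ Y W + ψ9 ⁅X, W⁆ Y Z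
        + ψ9 ⁅Y, Z⁆ X W - ψ9 ⁅Y, W⁆ X Z + ψ9 ⁅Z, W⁆ X Y = 0) ∧
    (∀ α β γ : Module.Dual ℝ M3,
      γ ⁅rsh9 α, rsh9 β⁆ + α ⁅rsh9 β, rsh9 γ⁆ + β ⁅rsh9 γ, rsh9 α⁆
        = - ψ9 (rsh9 α) (rsh9 β) (rsh9 γ)) := by
  constructor
  · intro X Y Z W hX hY hZ hW
    simp only [InG] at hX hY hZ hW
    simp only [ψ9, w3, lie_apply, hX, hY, hZ, hW, mul_zero, zero_mul, add_zero, sub_zero]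
    ring
  · intro α β γ
    simp only [bracket_rsh9, map_add, map_smul, smul_eq_mul, ψ9, w3,
      rsh9_00, rsh9_11, rsh9_02, rsh9_12]
    ring
end

section
/- Let $\mathfrak{q}_{n-1} \subset \mathfrak{gl}_n(\mathbb{R})$ be spanned by $\{e_{ij} : 1 \le i \le n-1,\ 1 \le j \le n\}$. Then $\mathfrak{q}_{n-1}$ is a Lie subalgebra of $\mathfrak{gl}_n(\mathbb{R})$, and the restriction to $\mathfrak{q}_{n-1}$ of the 2-cochain $\mu = \sum_{1\le i<j\le n-1} e_{ij}^*\wedge e_{ji}^* + \sum_{i=1}^{n-1} e_{ii}^*\wedge e_{in}^*$ on $\mathfrak{gl}_n(\mathbb{R})$ is non-degenerate. -/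
/-- The subspace `q_{n-1} ⊂ gl_n(ℝ)` (here `n = m+1`) spanned by
`{e_{ij} : 1 ≤ i ≤ n-1, 1 ≤ j ≤ n}`, i.e. the matrices with vanishing last row. -/
def Q (m : ℕ) : Submodule ℝ (Matrix (Fin (m + 1)) (Fin (m + 1)) ℝ) where
  carrier := {A | ∀ j, A (Fin.last m) j = 0}
  add_mem' := by intro a b ha hb j; simp [Matrix.add_apply, ha j, hb j]
  zero_mem' := by intro j; simp
  smul_mem' := by intro c a ha j; simp [Matrix.smul_apply, ha j]

/-- The 2-cochain `μ = ∑_{1≤i<j≤n-1} e_{ij}*∧e_{ji}* + ∑_{i=1}^{n-1} e_{ii}*∧e_{in}*`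
on `gl_n(ℝ)`, `n = m+1`, evaluated on a pair of matrices. -/
def μ11 (m : ℕ) (X Y : Matrix (Fin (m + 1)) (Fin (m + 1)) ℝ) : ℝ :=
  (∑ i : Fin m, ∑ j : Fin m, if (i : ℕ) < (j : ℕ) then
      X i.castSucc j.castSucc * Y j.castSucc i.castSucc
        - Y i.castSucc j.castSucc * X j.castSucc i.castSucc
    else 0)
  + ∑ i : Fin m,
      (X i.castSucc i.castSucc * Y i.castSucc (Fin.last m)
        - Y i.castSucc i.castSucc * X i.castSucc (Fin.last m))

/-!
`q_{n-1}` is a left ideal of the associative algebra `gl_n(ℝ)`, hence closed under commutators.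
For non-degeneracy, pairing `X ∈ q_{n-1}` with the elementary matrices of `q_{n-1}` reads off
every entry of `X` up to sign: `μ(X, e_{an}) = X_{aa}`, `μ(X, e_{aa}) = -X_{an}` and
`μ(X, e_{ab}) = ±X_{ba}` for `a ≠ b < n`; the last row of `X` vanishes by assumption.
-/

open Matrix

theorem sum_sum_ite_lt_single_sub {ι M : Type*} [Fintype ι] [LinearOrder ι] [AddCommGroup M]
    (f g : ι → ι → M) (p q : ι) :
    (∑ i, ∑ j, if i < j then
        (if p = j then if q = i then f i j else 0 else 0)
          - (if p = i then if q = j then g i j else 0 else 0) else 0)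
      = (if q < p then f q p else 0) - (if p < q then g p q else 0) := by
  have summand : ∀ i j, (if i < j then
        (if p = j then if q = i then f i j else 0 else 0)
          - (if p = i then if q = j then g i j else 0 else 0) else 0)
      = (if q = i then if p = j then (if q < p then f q p else 0) else 0 else 0)
        - (if p = i then if q = j then (if p < q then g p q else 0) else 0 else 0) := by
    intro i j
    split_ifs <;> grind
  simp [summand, Finset.sum_sub_distrib]

section

variable {m : ℕ}

theorem mem_Q_iff {X : Matrix (Fin (m + 1)) (Fin (m + 1)) ℝ} :
    X ∈ Q m ↔ ∀ j, X (Fin.last m) j = 0 :=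
  Iff.rfl

theorem mul_mem_Q {X : Matrix (Fin (m + 1)) (Fin (m + 1)) ℝ} (hX : X ∈ Q m)
    (Y : Matrix (Fin (m + 1)) (Fin (m + 1)) ℝ) : X * Y ∈ Q m := by
  intro j
  simp [mul_apply, mem_Q_iff.mp hX]

theorem lie_mem_Q {X Y : Matrix (Fin (m + 1)) (Fin (m + 1)) ℝ} (hX : X ∈ Q m)
    (hY : Y ∈ Q m) : ⁅X, Y⁆ ∈ Q m := by
  rw [Ring.lie_def]
  exact sub_mem (mul_mem_Q hX Y) (mul_mem_Q hY X)

theorem single_castSucc_mem_Q (a : Fin m) (q : Fin (m + 1)) :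
    single a.castSucc q (1 : ℝ) ∈ Q m := by
  intro j
  simp

theorem μ11_single_castSucc (X : Matrix (Fin (m + 1)) (Fin (m + 1)) ℝ) (a b : Fin m) :
    μ11 m X (single a.castSucc b.castSucc 1)
      = (if b < a then X b.castSucc a.castSucc else 0)
        - (if a < b then X b.castSucc a.castSucc else 0)
        - (if a = b then X a.castSucc (Fin.last m) else 0) := by
  simp [μ11, single_apply, ite_and, Fin.castSucc_inj, Fin.castSucc_ne_last,
    sum_sum_ite_lt_single_sub (fun i j : Fin m => X i.castSucc j.castSucc)
      (fun i j : Fin m => X j.castSucc i.castSucc)]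
  simp only [@eq_comm _ b a, sub_eq_add_neg]

theorem μ11_single_last (X : Matrix (Fin (m + 1)) (Fin (m + 1)) ℝ) (a : Fin m) :
    μ11 m X (single a.castSucc (Fin.last m) 1) = X a.castSucc a.castSucc := by
  simp [μ11, single_apply, Fin.castSucc_inj, (Fin.castSucc_ne_last _).symm]

end

/-- `q_{n-1}` (matrices with vanishing last row) is a Lie subalgebra of
`gl_n(ℝ)`, and the restriction to `q_{n-1}` of the 2-cochain
`μ = ∑_{1≤i<j≤n-1} e_{ij}*∧e_{ji}* + ∑_{i=1}^{n-1} e_{ii}*∧e_{in}*` is non-degenerate. -/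
theorem statement11 (m : ℕ) :
    (∀ X ∈ Q m, ∀ Y ∈ Q m, ⁅X, Y⁆ ∈ Q m) ∧
    (∀ X ∈ Q m, (∀ Y ∈ Q m, μ11 m X Y = 0) → X = 0) := by
  refine ⟨fun X hX Y hY => lie_mem_Q hX hY, fun X hX hμ => ?_⟩
  ext i j
  induction i using Fin.lastCases with
  | last => exact hX j
  | cast a =>
    induction j using Fin.lastCases with
    | last => simpa [μ11_single_castSucc] using hμ _ (single_castSucc_mem_Q a a.castSucc)
    | cast b =>
      rcases lt_trichotomy a b with hab | rfl | hab
      · simpa [μ11_single_castSucc, hab, hab.not_gt, hab.ne'] using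
          hμ _ (single_castSucc_mem_Q b a.castSucc)
      · simpa [μ11_single_last] using hμ _ (single_castSucc_mem_Q a (Fin.last m))
      · simpa [μ11_single_castSucc, hab, hab.not_gt, hab.ne] using
          hμ _ (single_castSucc_mem_Q b a.castSucc)
end

section
/- Let $\mathfrak{p}_1 \subset \mathfrak{sl}_n(\mathbb{R})$ be the maximal parabolic subalgebra consisting of trace-zero matrices whose entries $(i,1)$ vanish for $i \ge 2$ (all upper triangular matrices plus the root spaces except the first negative root). Then with $\xi = \sum_{i=1}^{n-1} e_{i,i+1}^*$, the pair $(\mathfrak{p}_1, \xi)$ is a Frobenius Lie algebra: the bilinear form $\mu(X,Y) = \xi([X,Y])$ on $\mathfrak{p}_1$ is non-degenerate. -/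
/-- Membership in the maximal parabolic subalgebra `p₁ ⊂ sl_n(ℝ)` (here `n = m+1`):
trace-zero matrices whose first column vanishes below the diagonal. -/
def InP1 {m : ℕ} (A : Matrix (Fin (m + 1)) (Fin (m + 1)) ℝ) : Prop :=
  Matrix.trace A = 0 ∧ ∀ i, i ≠ 0 → A i 0 = 0

/-- The functional `ξ = ∑_{i=1}^{n-1} e_{i,i+1}*`, extracting the sum of the
superdiagonal entries. -/
def ξ13 {m : ℕ} (A : Matrix (Fin (m + 1)) (Fin (m + 1)) ℝ) : ℝ :=
  ∑ i : Fin m, A i.castSucc i.succ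

namespace S13

variable {m : ℕ}

/-- entry function extended by zero outside range -/
def g (X : Matrix (Fin (m + 1)) (Fin (m + 1)) ℝ) (i j : ℕ) : ℝ :=
  if h : i < m + 1 ∧ j < m + 1 then X ⟨i, h.1⟩ ⟨j, h.2⟩ else 0

/-- `Z b a = (E X - X E) b a` written with ℕ indices -/
def Z (X : Matrix (Fin (m + 1)) (Fin (m + 1)) ℝ) (b a : Fin (m + 1)) : ℝ :=
  (if 1 ≤ (b : ℕ) then g X ((b : ℕ) - 1) (a : ℕ) else 0) - g X (b : ℕ) ((a : ℕ) + 1)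

lemma g_eq (X : Matrix (Fin (m + 1)) (Fin (m + 1)) ℝ) (i j : Fin (m + 1)) :
    g X (i : ℕ) (j : ℕ) = X i j := by
  simp [g, i.isLt, j.isLt]

/-- key computation: `ξ([X, e_{ab}]) = Z b a` -/
lemma xi_bracket_std (X : Matrix (Fin (m + 1)) (Fin (m + 1)) ℝ) (a b : Fin (m + 1)) :
    ξ13 ⁅X, Matrix.single a b 1⁆ = Z X b a := by
  have : ξ13 ⁅X, Matrix.single a b 1⁆ =
      (∑ i : Fin m, (X * Matrix.single a b 1 : Matrix (Fin (m+1)) (Fin (m+1)) ℝ) i.castSucc i.succ)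
      - ∑ i : Fin m, (Matrix.single a b 1 * X : Matrix (Fin (m+1)) (Fin (m+1)) ℝ) i.castSucc i.succ := by
    simp [ξ13, Ring.lie_def, Finset.sum_sub_distrib, Matrix.sub_apply]
  rw [this, Z]
  congr 1
  · refine Fin.cases ?_ ?_ b
    · rw [Finset.sum_eq_zero, if_neg (by simp)]
      intro i _
      exact Matrix.mul_single_apply_of_ne (c := 1) a 0 i.castSucc i.succ (Fin.succ_ne_zero i) X
    · intro j
      have h1 : (1:ℕ) ≤ (j.succ : ℕ) := by simp
      rw [if_pos h1]
      have : ∀ i : Fin m, (X * Matrix.single a j.succ 1 :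
          Matrix (Fin (m+1)) (Fin (m+1)) ℝ) i.castSucc i.succ
          = if i = j then X i.castSucc a else 0 := by
        intro i
        by_cases hij : i = j
        · subst hij; simp
        · rw [if_neg hij]
          exact Matrix.mul_single_apply_of_ne (c := 1) a j.succ i.castSucc i.succ
            (by simpa [Fin.succ_inj] using hij) X
      rw [Finset.sum_congr rfl (fun i _ => this i), Finset.sum_ite_eq' Finset.univ j
        (fun i => X i.castSucc a), if_pos (Finset.mem_univ j)]
      have hj : ((j.succ : ℕ) - 1) = (j.castSucc : ℕ) := by simp
      rw [hj, g_eq]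
  · refine Fin.lastCases ?_ ?_ a
    · rw [Finset.sum_eq_zero, eq_comm]
      · simp [g]
      intro i _
      exact Matrix.single_mul_apply_of_ne (c := 1) (Fin.last m) b i.castSucc i.succ
        (Fin.castSucc_lt_last i).ne X
    · intro j
      have : ∀ i : Fin m, (Matrix.single j.castSucc b 1 * X :
          Matrix (Fin (m+1)) (Fin (m+1)) ℝ) i.castSucc i.succ
          = if i = j then X b i.succ else 0 := by
        intro i
        by_cases hij : i = j
        · subst hij; simp
        · rw [if_neg hij]
          exact Matrix.single_mul_apply_of_ne (c := 1) j.castSucc b i.castSucc i.succ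
            (by simpa [Fin.castSucc_inj] using hij) X
      rw [Finset.sum_congr rfl (fun i _ => this i), Finset.sum_ite_eq' Finset.univ j
        (fun i => X b i.succ), if_pos (Finset.mem_univ j)]
      have hj : ((j.castSucc : ℕ) + 1) = (j.succ : ℕ) := by simp
      rw [hj, g_eq]


lemma g_oob (X : Matrix (Fin (m + 1)) (Fin (m + 1)) ℝ) {i j : ℕ} (h : ¬(i < m+1 ∧ j < m+1)) :
    g X i j = 0 := dif_neg h

lemma std_mem (a b : Fin (m + 1)) (hab : a ≠ b) (hb : b ≠ 0) :
    InP1 (Matrix.single a b (1:ℝ)) := by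
  constructor
  · exact Matrix.trace_single_eq_of_ne a b 1 hab
  · intro i _
    simp [Matrix.single]
    rintro rfl
    exact fun h => hb h

lemma diag_mem (b : Fin (m + 1)) :
    InP1 (Matrix.single b b (1:ℝ) - Matrix.single 0 0 (1:ℝ)) := by
  constructor
  · simp [Matrix.trace, Matrix.diag, Matrix.sub_apply, Matrix.single,
      Finset.sum_sub_distrib]
  · intro i hi
    simp only [Matrix.sub_apply, Matrix.single, Matrix.of_apply]
    rw [if_neg (fun h => hi (h.1.symm.trans h.2)), if_neg (fun h : (0:Fin (m+1)) = i ∧ _ => hi h.1.symm), sub_zero]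

lemma xi_sub (A B : Matrix (Fin (m + 1)) (Fin (m + 1)) ℝ) :
    ξ13 (A - B) = ξ13 A - ξ13 B := by
  simp [ξ13, Matrix.sub_apply, Finset.sum_sub_distrib]

/-- trace of Z vanishes -/
lemma sum_Z_diag (X : Matrix (Fin (m + 1)) (Fin (m + 1)) ℝ) :
    ∑ b : Fin (m + 1), Z X b b = 0 := by
  have h1 : ∑ b : Fin (m + 1), (if 1 ≤ (b:ℕ) then g X ((b:ℕ)-1) (b:ℕ) else 0)
      = ∑ j : Fin m, g X (j:ℕ) ((j:ℕ)+1) := by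
    rw [Fin.sum_univ_succ]
    simp [Fin.val_succ]
  have h2 : ∑ b : Fin (m + 1), g X (b:ℕ) ((b:ℕ)+1)
      = ∑ j : Fin m, g X (j:ℕ) ((j:ℕ)+1) := by
    rw [Fin.sum_univ_castSucc]
    rw [g_oob X (by simp [Fin.val_last])]
    simp [Fin.coe_castSucc]
  simp only [Z, Finset.sum_sub_distrib, h1, h2, sub_self]

section main
variable (X : Matrix (Fin (m + 1)) (Fin (m + 1)) ℝ)

lemma Z_zero (hX : InP1 X)
    (h : ∀ Y : Matrix (Fin (m + 1)) (Fin (m + 1)) ℝ, InP1 Y → ξ13 ⁅X, Y⁆ = 0) :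
    ∀ b a : Fin (m + 1), b ≠ 0 → Z X b a = 0 := by
  have hoff : ∀ b a : Fin (m + 1), b ≠ 0 → a ≠ b → Z X b a = 0 := fun b a hb hab => by
    rw [← xi_bracket_std]; exact h _ (std_mem a b hab hb)
  have hdiag : ∀ b : Fin (m + 1), Z X b b = Z X 0 0 := by
    intro b
    have := h _ (diag_mem b)
    rw [show ⁅X, Matrix.single b b (1:ℝ) - Matrix.single 0 0 (1:ℝ)⁆ = ⁅X, Matrix.single b b (1:ℝ)⁆ - ⁅X, Matrix.single 0 0 (1:ℝ)⁆ by simp only [Ring.lie_def, mul_sub, sub_mul]; abel, xi_sub, xi_bracket_std, xi_bracket_std] at this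
    linarith
  have h00 : Z X 0 0 = 0 := by
    have := sum_Z_diag X
    rw [Finset.sum_congr rfl (fun b _ => hdiag b), Finset.sum_const, Finset.card_univ,
      Fintype.card_fin, nsmul_eq_mul] at this
    have hm : ((m:ℝ) + 1) ≠ 0 := by positivity
    push_cast at this
    exact by nlinarith [this]
  intro b a hb
  by_cases hab : a = b
  · subst hab; rw [hdiag, h00]
  · exact hoff b a hb hab

lemma F1 (hX : InP1 X)
    (h : ∀ Y : Matrix (Fin (m + 1)) (Fin (m + 1)) ℝ, InP1 Y → ξ13 ⁅X, Y⁆ = 0) :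
    ∀ i j : ℕ, i < m → j ≤ m → g X i j = g X (i+1) (j+1) := by
  intro i j hi hj
  have hz := Z_zero X hX h ⟨i+1, by omega⟩ ⟨j, by omega⟩
    (by simp [Fin.ext_iff])
  rw [Z] at hz
  simp only [if_pos (by omega : 1 ≤ i+1)] at hz
  have : (i + 1 - 1) = i := by omega
  rw [this] at hz
  linarith

lemma F2 (hX : InP1 X) : ∀ i : ℕ, 1 ≤ i → g X i 0 = 0 := by
  intro i hi
  by_cases hlt : i < m + 1
  · have : g X i 0 = X ⟨i, hlt⟩ 0 := by simp [g, hlt]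
    rw [this]
    exact hX.2 _ (by simp [Fin.ext_iff]; omega)
  · exact g_oob X (by omega)

lemma above (hF1 : ∀ i j : ℕ, i < m → j ≤ m → g X i j = g X (i+1) (j+1)) :
    ∀ k i j : ℕ, j + k = m → i < j → g X i j = 0 := by
  intro k
  induction k with
  | zero => intro i j hj hij
            rw [hF1 i j (by omega) (by omega)]
            exact g_oob X (by omega)
  | succ k ih => intro i j hj hij
                 rw [hF1 i j (by omega) (by omega)]
                 exact ih (i+1) (j+1) (by omega) (by omega)

lemma below (hF1 : ∀ i j : ℕ, i < m → j ≤ m → g X i j = g X (i+1) (j+1))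
    (hF2 : ∀ i : ℕ, 1 ≤ i → g X i 0 = 0) :
    ∀ j i : ℕ, j < i → i ≤ m → g X i j = 0 := by
  intro j
  induction j with
  | zero => intro i hi _; exact hF2 i hi
  | succ j ih => intro i hi him
                 have h1 : g X (i-1) j = g X i (j+1) := by
                   have := hF1 (i-1) j (by omega) (by omega)
                   have h2 : i - 1 + 1 = i := by omega
                   rwa [h2] at this
                 rw [← h1]
                 exact ih (i-1) (by omega) (by omega)

lemma diag (hF1 : ∀ i j : ℕ, i < m → j ≤ m → g X i j = g X (i+1) (j+1)) :
    ∀ k i : ℕ, i + k = m → g X i i = g X m m := by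
  intro k
  induction k with
  | zero => intro i hi
            have : i = m := by omega
            subst this; rfl
  | succ k ih => intro i hi
                 rw [hF1 i i (by omega) (by omega)]
                 exact ih (i+1) (by omega)

end main

end S13

/-- `(p₁, ξ)` with `ξ = ∑_{i=1}^{n-1} e_{i,i+1}*` is a Frobenius Lie
algebra: the bilinear form `μ(X,Y) = ξ([X,Y])` on `p₁` is non-degenerate. -/
theorem statement13 (m : ℕ) :
    ∀ X : Matrix (Fin (m + 1)) (Fin (m + 1)) ℝ, InP1 X →
      (∀ Y : Matrix (Fin (m + 1)) (Fin (m + 1)) ℝ, InP1 Y → ξ13 ⁅X, Y⁆ = 0) → X = 0 := by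
  intro X hX h
  have hF1 := S13.F1 X hX h
  have hF2 := S13.F2 X hX
  have hdiag : S13.g X m m = 0 := by
    have e : ∀ p : Fin (m+1), X p p = S13.g X m m := fun p => by
      have hp := p.isLt
      rw [← S13.g_eq X p p]
      exact S13.diag X hF1 (m - (p:ℕ)) (p:ℕ) (by omega)
    have htr : ∑ p : Fin (m+1), X p p = 0 := by
      simpa [Matrix.trace, Matrix.diag] using hX.1
    have h2 : ∑ p : Fin (m+1), X p p = (m+1 : ℕ) • S13.g X m m := by
      rw [Finset.sum_congr rfl (fun p _ => e p), Finset.sum_const, Finset.card_univ,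
        Fintype.card_fin]
    rw [htr, nsmul_eq_mul] at h2
    have hm : ((m:ℝ) + 1) ≠ 0 := by positivity
    push_cast at h2
    nlinarith [h2]
  ext p q
  have hp := p.isLt
  have hq := q.isLt
  rw [← S13.g_eq X p q]
  rcases lt_trichotomy (p:ℕ) (q:ℕ) with hpq | hpq | hpq
  · rw [S13.above X hF1 (m - (q:ℕ)) (p:ℕ) (q:ℕ) (by omega) hpq]; rfl
  · rw [show (p:ℕ) = (q:ℕ) from hpq, S13.diag X hF1 (m - (q:ℕ)) (q:ℕ) (by omega), hdiag]; rfl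
  · rw [S13.below X hF1 hF2 (q:ℕ) (p:ℕ) hpq (by omega)]; rfl
end

section
/- Let $\mathfrak{p}_1 \subset \mathfrak{sl}_n(\mathbb{R})$ be the maximal parabolic subalgebra of matrices whose first column vanishes below the diagonal, and let $\xi = \sum_{i=1}^{n-1} e_{i,i+1}^* \in \mathfrak{p}_1^*$. Then the element $X = -\sum_{k=1}^{n-1}(n-k)e_{k,k+1} \in \mathfrak{p}_1$ is the unique element of $\mathfrak{p}_1$ satisfying $\mathrm{ad}^*_X(\xi) = \chi$, where $\chi \in \mathfrak{p}_1^*$ is given by $\chi(Y) = -(n-1)Y_{11} + Y_{22} + \cdots + Y_{nn}$. -/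
/-- The functional `χ(Y) = -(n-1)Y₁₁ + Y₂₂ + ⋯ + Y_nn` (with `n = m+1`). -/
def χ15 {m : ℕ} (Y : Matrix (Fin (m + 1)) (Fin (m + 1)) ℝ) : ℝ :=
  -(m : ℝ) * Y 0 0 + ∑ i : Fin m, Y i.succ i.succ

/-- The element `X = -∑_{k=1}^{n-1} (n-k) e_{k,k+1}` (with `n = m+1`). -/
noncomputable def X15 (m : ℕ) : Matrix (Fin (m + 1)) (Fin (m + 1)) ℝ :=
  -∑ k : Fin m, ((m : ℝ) - (k : ℕ)) • Matrix.single k.castSucc k.succ 1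

open Matrix
variable {m : ℕ}

lemma xi_bracket (Z Y : Matrix (Fin (m+1)) (Fin (m+1)) ℝ) :
    ξ13 ⁅Z,Y⁆ = ∑ i : Fin m, ((Z * Y) i.castSucc i.succ - (Y * Z) i.castSucc i.succ) := by
  simp [ξ13, Ring.lie_def, Matrix.sub_apply]

lemma xi_std (Z : Matrix (Fin (m+1)) (Fin (m+1)) ℝ) (a b : Fin (m+1)) :
    ξ13 ⁅Z, Matrix.single a b 1⁆ =
      (∑ j : Fin m, if b = j.succ then Z j.castSucc a else 0)
      - (∑ j : Fin m, if a = j.castSucc then Z b j.succ else 0) := by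
  rw [xi_bracket, Finset.sum_sub_distrib]
  congr 1 <;> apply Finset.sum_congr rfl <;> intro j _ <;>
    simp [Matrix.mul_apply, Matrix.single, ite_and, eq_comm]

lemma sum_succ_eq (b : Fin m) (f : Fin m → ℝ) :
    (∑ j : Fin m, if b.succ = j.succ then f j else 0) = f b := by
  rw [Finset.sum_eq_single b] <;> simp +contextual [Fin.succ_inj, eq_comm]

lemma sum_castSucc_eq (a : Fin m) (f : Fin m → ℝ) :
    (∑ j : Fin m, if a.castSucc = j.castSucc then f j else 0) = f a := by
  rw [Finset.sum_eq_single a] <;> simp +contextual [Fin.castSucc_inj, eq_comm]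

lemma xi_std1 (Z : Matrix (Fin (m+1)) (Fin (m+1)) ℝ) (i j : Fin m) :
    ξ13 ⁅Z, Matrix.single i.castSucc j.succ 1⁆ =
      Z j.castSucc i.castSucc - Z j.succ i.succ := by
  rw [xi_std, sum_succ_eq, sum_castSucc_eq]

lemma xi_std2 (Z : Matrix (Fin (m+1)) (Fin (m+1)) ℝ) (j : Fin m) :
    ξ13 ⁅Z, Matrix.single (Fin.last m) j.succ 1⁆ = Z j.castSucc (Fin.last m) := by
  rw [xi_std, sum_succ_eq]
  simp [(Fin.castSucc_lt_last _).ne']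
lemma xi_diag0 {p : ℕ} (Z : Matrix (Fin (p+2)) (Fin (p+2)) ℝ) :
    ξ13 ⁅Z, Matrix.single (0 : Fin (p+2)) 0 1⁆ = - Z 0 1 := by
  have h0 : (0 : Fin (p+2)) = (0 : Fin (p+1)).castSucc := by simp
  rw [xi_std]
  rw [show (∑ j : Fin (p+1), if (0:Fin (p+2)) = j.succ then Z j.castSucc 0 else 0) = 0 by
    apply Finset.sum_eq_zero; intro j _; simp [(Fin.succ_ne_zero j).symm]]
  conv_lhs => rw [h0, sum_castSucc_eq]
  simp

lemma xi_diag_last {m : ℕ} (Z : Matrix (Fin (m+1)) (Fin (m+1)) ℝ) (j : Fin m)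
    (hj : j.succ = Fin.last m) :
    ξ13 ⁅Z, Matrix.single j.succ j.succ 1⁆ = Z j.castSucc j.succ := by
  rw [xi_std, sum_succ_eq]
  rw [show (∑ k : Fin m, if j.succ = k.castSucc then Z j.succ k.succ else 0) = 0 by
    apply Finset.sum_eq_zero; intro k _; rw [hj]; simp [(Fin.castSucc_lt_last _).ne']]
  ring

lemma xi_diag_mid {m : ℕ} (Z : Matrix (Fin (m+1)) (Fin (m+1)) ℝ) (j j2 : Fin m)
    (hj : j.succ = j2.castSucc) :
    ξ13 ⁅Z, Matrix.single j.succ j.succ 1⁆ =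
      Z j.castSucc j.succ - Z j2.castSucc j2.succ := by
  rw [xi_std, sum_succ_eq]
  congr 1
  conv_lhs => rw [hj, sum_castSucc_eq]

lemma inP1_std {m : ℕ} (a b : Fin (m+1)) (hab : a ≠ b) (hb : b ≠ 0) :
    InP1 (Matrix.single a b 1) := by
  constructor
  · exact Matrix.trace_single_eq_of_ne a b 1 hab
  · intro i hi
    simp only [Matrix.single, Matrix.of_apply]
    rw [if_neg (by rintro ⟨-, h⟩; exact hb h)]

lemma inP1_diag_diff {m : ℕ} (a : Fin (m+1)) (ha : a ≠ 0) :
    InP1 (Matrix.single a a 1 - Matrix.single 0 0 1) := by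
  constructor
  · simp [Matrix.trace_sub]
  · intro i hi
    simp only [Matrix.sub_apply, Matrix.single, Matrix.of_apply]
    rw [if_neg (by rintro ⟨rfl, rfl⟩; exact ha rfl), if_neg (by rintro ⟨h, -⟩; exact hi h.symm)]
    ring

lemma xi_sub {m : ℕ} (Z A B : Matrix (Fin (m+1)) (Fin (m+1)) ℝ) :
    ξ13 ⁅Z, A - B⁆ = ξ13 ⁅Z, A⁆ - ξ13 ⁅Z, B⁆ := by
  letI := LieRing.ofAssociativeRing (A := Matrix (Fin (m+1)) (Fin (m+1)) ℝ)
  simp [lie_sub, ξ13, Matrix.sub_apply, Finset.sum_sub_distrib]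
open Fin.NatCast in
open Matrix in
lemma cast_cs {m : ℕ} (i : Fin m) : (((i:ℕ)) : Fin (m+1)) = i.castSucc := by
  ext; simp [Fin.val_natCast, Nat.mod_eq_of_lt (i.isLt.trans (Nat.lt_succ_self m))]

open Fin.NatCast in
lemma cast_s {m : ℕ} (i : Fin m) : (((i:ℕ)+1 : ℕ) : Fin (m+1)) = i.succ := by
  ext; simp [Fin.val_natCast, Nat.mod_eq_of_lt (Nat.succ_lt_succ i.isLt)]

lemma abel15 (m : ℕ) (D : ℕ → ℝ) :
    ∑ i ∈ Finset.range m, ((m:ℝ) - i) * (D (i+1) - D i)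
      = -(m:ℝ) * D 0 + ∑ i ∈ Finset.range m, D (i+1) := by
  set f : ℕ → ℝ := fun t => ((m:ℝ) - t) * D t with hf
  have key : ∀ i ∈ Finset.range m, ((m:ℝ) - i) * (D (i+1) - D i)
      = (f (i+1) - f i) + D (i+1) := by
    intro i _; simp only [hf]; push_cast; ring
  rw [Finset.sum_congr rfl key, Finset.sum_add_distrib, Finset.sum_range_sub f]
  simp only [hf]
  push_cast
  ring

lemma xiX {m : ℕ} (Y : Matrix (Fin (m+1)) (Fin (m+1)) ℝ) :
    ξ13 ⁅X15 m, Y⁆ = ∑ i : Fin m,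
      (-((m:ℝ) - i)) * (Y i.succ i.succ - Y i.castSucc i.castSucc) := by
  rw [xi_bracket]
  apply Finset.sum_congr rfl; intro i _
  have h1 : (X15 m * Y) i.castSucc i.succ = -(((m:ℝ) - i) * Y i.succ i.succ) := by
    rw [X15, Matrix.neg_mul, Matrix.neg_apply, Finset.sum_mul, Matrix.sum_apply]
    rw [Finset.sum_eq_single i]
    · rw [Matrix.smul_mul, Matrix.smul_apply, Matrix.single_mul_apply_same]
      simp
    · intro k _ hk
      have hne : i.castSucc ≠ k.castSucc := by simp [Fin.castSucc_inj, hk.symm]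
      simp [Matrix.smul_mul, hne]
    · simp
  have h2 : (Y * X15 m) i.castSucc i.succ = -(((m:ℝ) - i) * Y i.castSucc i.castSucc) := by
    rw [X15, Matrix.mul_neg, Matrix.neg_apply, Finset.mul_sum, Matrix.sum_apply]
    rw [Finset.sum_eq_single i]
    · rw [Matrix.mul_smul, Matrix.smul_apply, Matrix.mul_single_apply_same]
      simp [mul_comm]
    · intro k _ hk
      have hne : i.succ ≠ k.succ := by simp [Fin.succ_inj, hk.symm]
      simp [Matrix.mul_smul, hne]
    · simp
  rw [h1, h2]; ring

open Fin.NatCast in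
lemma part2 {m : ℕ} (Y : Matrix (Fin (m+1)) (Fin (m+1)) ℝ) :
    - ξ13 ⁅X15 m, Y⁆ = χ15 Y := by
  rw [xiX, χ15, ← Finset.sum_neg_distrib]
  set D : ℕ → ℝ := fun t => Y (t : Fin (m+1)) (t : Fin (m+1)) with hD
  have e1 : ∀ i : Fin m, -((-((m:ℝ) - i)) * (Y i.succ i.succ - Y i.castSucc i.castSucc))
      = (fun t : ℕ => ((m:ℝ) - t) * (D (t+1) - D t)) (i : ℕ) := by
    intro i
    simp only [hD]
    rw [cast_s, cast_cs]
    ring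
  rw [Finset.sum_congr rfl (fun i _ => e1 i),
      Fin.sum_univ_eq_sum_range (fun t : ℕ => ((m:ℝ) - t) * (D (t+1) - D t)) m, abel15,
      ← Fin.sum_univ_eq_sum_range (fun t : ℕ => D (t+1)) m]
  have hD0 : D 0 = Y 0 0 := by simp only [hD, Nat.cast_zero]
  have hDs : ∀ i : Fin m, D ((i:ℕ)+1) = Y i.succ i.succ := by
    intro i; simp only [hD]; rw [cast_s]
  rw [hD0, Finset.sum_congr rfl (fun i _ => hDs i)]
lemma part1 {m : ℕ} : InP1 (X15 m) := by
  constructor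
  · have h : ∀ (k : Fin m) (c : ℝ), Matrix.trace (Matrix.single k.castSucc k.succ c) = 0 :=
      fun k c => Matrix.trace_single_eq_of_ne _ _ _ k.castSucc_lt_succ.ne
    simp [X15, Matrix.trace_sum, Matrix.trace_smul, h]
  · intro i hi
    simp only [X15, Matrix.neg_apply, Matrix.sum_apply, Matrix.smul_apply,
      Matrix.single, Matrix.of_apply]
    rw [Finset.sum_eq_zero, neg_zero]
    intro k _
    rw [if_neg (by rintro ⟨-, h⟩; exact Fin.succ_ne_zero k h)]
    simp

lemma key_zero : ∀ (m : ℕ) (Z : Matrix (Fin (m+1)) (Fin (m+1)) ℝ), InP1 Z →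
    (∀ Y : Matrix (Fin (m+1)) (Fin (m+1)) ℝ, InP1 Y → ξ13 ⁅Z, Y⁆ = 0) → Z = 0 := by
  intro m
  match m with
  | 0 =>
    intro Z hZ _
    ext a b
    fin_cases a; fin_cases b
    simpa [Matrix.trace, Matrix.diag] using hZ.1
  | p + 1 =>
    intro Z hZ h0
    -- basic bracket facts
    have hF1 : ∀ i j : Fin (p+1), i.castSucc ≠ j.succ →
        Z j.castSucc i.castSucc = Z j.succ i.succ := by
      intro i j hne
      have h := h0 _ (inP1_std i.castSucc j.succ hne (Fin.succ_ne_zero j))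
      rw [xi_std1] at h; linarith
    have hF2 : ∀ j : Fin (p+1), j.succ ≠ Fin.last (p+1) →
        Z j.castSucc (Fin.last (p+1)) = 0 := by
      intro j hne
      have h := h0 _ (inP1_std (Fin.last (p+1)) j.succ (Ne.symm hne) (Fin.succ_ne_zero j))
      rwa [xi_std2] at h
    -- diagonal
    have hdiag : ∀ a : Fin (p+2), Z a a = Z 0 0 := by
      intro a
      induction a using Fin.induction with
      | zero => rfl
      | succ j ih => rw [← hF1 j j j.castSucc_lt_succ.ne]; exact ih
    have htr : Z 0 0 = 0 := by
      have hsum : ∑ a : Fin (p+2), Z a a = 0 := by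
        simpa [Matrix.trace, Matrix.diag] using hZ.1
      rw [Finset.sum_congr rfl (fun a _ => hdiag a), Finset.sum_const, Finset.card_univ] at hsum
      simp only [Fintype.card_fin, nsmul_eq_mul] at hsum
      have hne : ((p:ℝ)+2) ≠ 0 := by positivity
      rcases mul_eq_zero.mp hsum with h | h
      · exact absurd (by push_cast at h ⊢; linarith) hne
      · exact h
    have hd : ∀ a : Fin (p+2), Z a a = 0 := fun a => (hdiag a).trans htr
    -- strictly lower triangle
    have hlow : ∀ n : ℕ, ∀ a b : Fin (p+2), (b:ℕ) = n → (b:ℕ) < (a:ℕ) → Z a b = 0 := by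
      intro n
      induction n with
      | zero =>
        intro a b hb hba
        have hb0 : b = 0 := Fin.ext hb
        subst hb0
        exact hZ.2 a (fun h => by simp [h] at hba)
      | succ n ih =>
        intro a b hb hba
        have ha0 : a ≠ 0 := fun h => by simp [h] at hba
        have hb0 : b ≠ 0 := fun h => by simp [h] at hb
        have ha : a = (a.pred ha0).succ := (Fin.succ_pred a ha0).symm
        have hbe : b = (b.pred hb0).succ := (Fin.succ_pred b hb0).symm
        have hcond : (b.pred hb0).castSucc ≠ (a.pred ha0).succ := by
          simp only [Ne, Fin.ext_iff, Fin.coe_castSucc, Fin.coe_pred, Fin.val_succ]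
          omega
        rw [ha, hbe, ← hF1 (b.pred hb0) (a.pred ha0) hcond]
        apply ih
        · simp only [Fin.coe_castSucc, Fin.coe_pred]; omega
        · simp only [Fin.coe_castSucc, Fin.coe_pred]; omega
    -- upper triangle, offset ≥ 2
    have hup : ∀ n : ℕ, ∀ a b : Fin (p+2), (a:ℕ) + 2 ≤ (b:ℕ) → (b:ℕ) + n = p + 1 →
        Z a b = 0 := by
      intro n
      induction n with
      | zero =>
        intro a b hab hbm
        have hb : b = Fin.last (p+1) := Fin.ext (by simpa using hbm)
        subst hb
        have halt : (a:ℕ) < p + 1 := by simp [Fin.val_last] at hab; omega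
        have ha : a = (⟨(a:ℕ), halt⟩ : Fin (p+1)).castSucc := Fin.ext rfl
        rw [ha]
        apply hF2
        simp only [Ne, Fin.ext_iff, Fin.val_succ, Fin.val_last]
        simp [Fin.val_last] at hab; omega
      | succ n ih =>
        intro a b hab hbm
        have hblt : (b:ℕ) < p + 1 := by omega
        have halt : (a:ℕ) < p + 1 := by omega
        have ha : a = (⟨(a:ℕ), halt⟩ : Fin (p+1)).castSucc := Fin.ext rfl
        have hbe : b = (⟨(b:ℕ), hblt⟩ : Fin (p+1)).castSucc := Fin.ext rfl
        rw [ha, hbe, hF1 ⟨(b:ℕ), hblt⟩ ⟨(a:ℕ), halt⟩ (by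
          simp only [Ne, Fin.ext_iff, Fin.coe_castSucc, Fin.val_succ]; omega)]
        apply ih
        · simp only [Fin.val_succ]; omega
        · simp only [Fin.val_succ]; omega
    -- superdiagonal via lambda
    set lam : ℝ := ξ13 ⁅Z, Matrix.single (0 : Fin (p+2)) 0 1⁆ with hlamdef
    have hlam : lam = -Z 0 1 := xi_diag0 Z
    have hg : ∀ a : Fin (p+2), a ≠ 0 → ξ13 ⁅Z, Matrix.single a a 1⁆ = lam := by
      intro a ha
      have h := h0 _ (inP1_diag_diff a ha)
      rw [xi_sub] at h; linarith
    have htop : Z (Fin.last p).castSucc (Fin.last p).succ = lam := by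
      have h := hg ((Fin.last p).succ) (Fin.succ_ne_zero _)
      rwa [xi_diag_last Z (Fin.last p) (Fin.succ_last p)] at h
    have hstep : ∀ j j2 : Fin (p+1), j.succ = j2.castSucc →
        Z j.castSucc j.succ = Z j2.castSucc j2.succ + lam := by
      intro j j2 hj
      have h := hg j.succ (Fin.succ_ne_zero _)
      rw [xi_diag_mid Z j j2 hj] at h; linarith
    have hs : ∀ n : ℕ, ∀ j : Fin (p+1), (j:ℕ) + n = p →
        Z j.castSucc j.succ = ((n:ℝ)+1) * lam := by
      intro n
      induction n with
      | zero =>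
        intro j hj
        have : j = Fin.last p := Fin.ext (by simpa using hj)
        rw [this, htop]; ring
      | succ n ih =>
        intro j hj
        have hjlt : (j:ℕ) < p := by omega
        have hcs : j.succ = (⟨(j:ℕ)+1, by omega⟩ : Fin (p+1)).castSucc := Fin.ext (by simp)
        rw [hstep j _ hcs, ih ⟨(j:ℕ)+1, by omega⟩ (by simp; omega)]
        push_cast; ring
    have h01 : Z 0 1 = ((p:ℝ)+1) * lam := by
      have h := hs p 0 (by simp)
      simpa using h
    have hlam0 : lam = 0 := by
      have h2 : ((p:ℝ)+2) * lam = 0 := by linear_combination hlam - h01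
      have hne : ((p:ℝ)+2) ≠ 0 := by positivity
      exact (mul_eq_zero.mp h2).resolve_left hne
    have hsup : ∀ j : Fin (p+1), Z j.castSucc j.succ = 0 := by
      intro j
      have h := hs (p - (j:ℕ)) j (by omega)
      rw [hlam0, mul_zero] at h; exact h
    -- conclude
    ext a b
    rw [Matrix.zero_apply]
    rcases lt_trichotomy (b:ℕ) (a:ℕ) with h | h | h
    · exact hlow (b:ℕ) a b rfl h
    · have : a = b := Fin.ext h.symm
      subst this; exact hd a
    · rcases Nat.lt_or_ge ((a:ℕ)+1) (b:ℕ) with h2 | h2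
      · exact hup ((p+1) - (b:ℕ)) a b (by omega) (by omega)
      · have hb : (b:ℕ) = (a:ℕ) + 1 := by omega
        have halt : (a:ℕ) < p + 1 := by omega
        have ha : a = (⟨(a:ℕ), halt⟩ : Fin (p+1)).castSucc := Fin.ext rfl
        have hbe : b = (⟨(a:ℕ), halt⟩ : Fin (p+1)).succ := Fin.ext (by simpa using hb)
        rw [ha, hbe]; exact hsup _
lemma xi13_sub {m : ℕ} (A B : Matrix (Fin (m+1)) (Fin (m+1)) ℝ) :
    ξ13 (A - B) = ξ13 A - ξ13 B := by
  simp [ξ13, Matrix.sub_apply, Finset.sum_sub_distrib]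


/-- `X = -∑_{k=1}^{n-1}(n-k)e_{k,k+1}` is the unique element of `p₁`
with `ad*_X(ξ) = χ`, i.e. `-ξ([X,Y]) = χ(Y)` for all `Y ∈ p₁`, where
`ξ = ∑ e_{i,i+1}*` and `χ(Y) = -(n-1)Y₁₁ + Y₂₂ + ⋯ + Y_nn`. -/
theorem statement15 (m : ℕ) :
    InP1 (X15 m) ∧
    (∀ Y : Matrix (Fin (m + 1)) (Fin (m + 1)) ℝ, InP1 Y → - ξ13 ⁅X15 m, Y⁆ = χ15 Y) ∧
    (∀ X' : Matrix (Fin (m + 1)) (Fin (m + 1)) ℝ, InP1 X' → (∀ Y : Matrix (Fin (m + 1)) (Fin (m + 1)) ℝ, InP1 Y → - ξ13 ⁅X', Y⁆ = χ15 Y) → X' = X15 m) := by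
  refine ⟨part1, fun Y _ => part2 Y, ?_⟩
  intro X' hX' hbr
  have hP1X : InP1 (X15 m) := part1
  have hZ : InP1 (X' - X15 m) := by
    refine ⟨by simp [Matrix.trace_sub, hX'.1, hP1X.1], fun i hi => ?_⟩
    simp [Matrix.sub_apply, hX'.2 i hi, hP1X.2 i hi]
  have h0 : ∀ Y : Matrix (Fin (m + 1)) (Fin (m + 1)) ℝ, InP1 Y →
      ξ13 ⁅X' - X15 m, Y⁆ = 0 := by
    intro Y hY
    have e1 := hbr Y hY
    have e2 := part2 (m := m) Y
    letI := LieRing.ofAssociativeRing (A := Matrix (Fin (m + 1)) (Fin (m + 1)) ℝ)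
    rw [sub_lie, xi13_sub]
    linarith
  exact sub_eq_zero.mp (key_zero m (X' - X15 m) hZ h0)
end

section
/- Let $\mathfrak{g}$ be the Lie subalgebra of $\mathfrak{gl}_3(\mathbb{R})$ spanned by $\{e_{ij} : 1\le i\le 2, 1\le j\le 3\}$, $r = e_{11}\wedge e_{22} + e_{13}\wedge e_{23}$, $\psi = -(e_{11}^*+e_{22}^*)\wedge e_{13}^*\wedge e_{23}^*$, and $\psi_1 = -(e_{11}^*+e_{22}^*)\wedge e_{13}^*\wedge e_{23}^* - e_{12}^*\wedge e_{21}^*\wedge e_{22}^* + e_{11}^*\wedge e_{21}^*\wedge e_{12}^*$. Then $\psi - \psi_1$ is a 3-cocycle of $\mathfrak{g}$ and $(\wedge^3 r^\sharp)(\psi - \psi_1) = 0$. -/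
/-- `ψ₁ = -(e₁₁*+e₂₂*)∧e₁₃*∧e₂₃* - e₁₂*∧e₂₁*∧e₂₂* + e₁₁*∧e₂₁*∧e₁₂*`. -/
def ψ1 (X Y Z : M3) : ℝ :=
  -(w3 (fun A => A 0 0 + A 1 1) (fun A => A 0 2) (fun A => A 1 2) X Y Z)
    - w3 (fun A => A 0 1) (fun A => A 1 0) (fun A => A 1 1) X Y Z
    + w3 (fun A => A 0 0) (fun A => A 1 0) (fun A => A 0 1) X Y Z

/-- `ψ - ψ₁` is a 3-cocycle of the Lie subalgebra `g` of `gl₃(ℝ)` of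
matrices with vanishing third row, and `(∧³r^♯)(ψ - ψ₁) = 0` for
`r = e₁₁∧e₂₂ + e₁₃∧e₂₃`. -/
theorem statement19 :
    (∀ X Y Z W : M3, InG X → InG Y → InG Z → InG W →
      (ψ9 ⁅X, Y⁆ Z W - ψ1 ⁅X, Y⁆ Z W) - (ψ9 ⁅X, Z⁆ Y W - ψ1 ⁅X, Z⁆ Y W)
        + (ψ9 ⁅X, W⁆ Y Z - ψ1 ⁅X, W⁆ Y Z) + (ψ9 ⁅Y, Z⁆ X W - ψ1 ⁅Y, Z⁆ X W)
        - (ψ9 ⁅Y, W⁆ X Z - ψ1 ⁅Y, W⁆ X Z) + (ψ9 ⁅Z, W⁆ X Y - ψ1 ⁅Z, W⁆ X Y) = 0) ∧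
    (∀ α β γ : Module.Dual ℝ M3,
      ψ9 (rsh9 α) (rsh9 β) (rsh9 γ) - ψ1 (rsh9 α) (rsh9 β) (rsh9 γ) = 0) := by
  constructor
  · intro X Y Z W hX hY hZ hW
    simp only [ψ9, ψ1, w3, Ring.lie_def, Matrix.sub_apply, Matrix.mul_apply,
      Fin.sum_univ_three, hX 0, hX 1, hX 2, hY 0, hY 1, hY 2, hZ 0, hZ 1, hZ 2,
      hW 0, hW 1, hW 2]
    ring
  · intro α β γ
    simp only [ψ9, ψ1, w3, rsh9, Matrix.add_apply, Matrix.sub_apply,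
      Matrix.smul_apply, E, Matrix.single, Matrix.of_apply, smul_eq_mul,
      Fin.ext_iff]
    norm_num
end
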